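/- Let w in R^d be a unit vector and x1, x2 in R^d with f_dc(x1) < f_dc(x2). If w separates all circular shifts of x1 from all circular shifts of x2 with margin m = min_s w·x2^s - max_s w·x1^s > 0, then w must satisfy f_dc(w) >= m / (f_dc(x2) - f_dc(x1)) > 0. -/

import Mathlib

open Matrix

/-- Circular shift of a vector in `ℝ^d` by `s` positions. -/
def shift {d : ℕ} (x : Fin d → ℝ) (s : Fin d) : Fin d → ℝ := fun i => x (i + s)

/-- The DC component of a signal: `f_dc x = (1/√d) ∑ i, x i`. -/
noncomputable def fdc {d : ℕ} (x : Fin d → ℝ) : ℝ := (1 / Real.sqrt d) * ∑ i : Fin d, x i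

lemma sum_shift_dot {d : ℕ} [NeZero d] (w x : Fin d → ℝ) :
    ∑ s : Fin d, w ⬝ᵥ shift x s = (∑ i, w i) * (∑ i, x i) := by
  simp only [dotProduct, shift, Finset.sum_mul]
  rw [Finset.sum_comm]
  refine Finset.sum_congr rfl fun i _ => ?_
  rw [← Finset.mul_sum]
  congr 1
  exact Fintype.sum_equiv (Equiv.addLeft i) _ _ (fun s => rfl)

/-- If a unit vector `w` separates all circular shifts of `x1` from all circular
shifts of `x2` with positive margin `m = min_s w·x2ˢ − max_s w·x1ˢ`, and
`f_dc(x1) < f_dc(x2)`, then `f_dc(w) ≥ m / (f_dc(x2) − f_dc(x1)) > 0`. -/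
theorem fdc_w_lower_bound {d : ℕ} (hd : 0 < d)
    (hne : (Finset.univ : Finset (Fin d)).Nonempty)
    (w x1 x2 : Fin d → ℝ) (hw : ∑ i : Fin d, w i ^ 2 = 1)
    (hdc : fdc x1 < fdc x2) (m : ℝ)
    (hm : m = Finset.univ.inf' hne (fun s : Fin d => w ⬝ᵥ shift x2 s) -
        Finset.univ.sup' hne (fun s : Fin d => w ⬝ᵥ shift x1 s))
    (hmpos : 0 < m) :
    m / (fdc x2 - fdc x1) ≤ fdc w ∧ 0 < fdc w := by
  have hdpos : (0:ℝ) < d := Nat.cast_pos.mpr hd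
  have hsq : Real.sqrt d * Real.sqrt d = d := Real.mul_self_sqrt (le_of_lt hdpos)
  haveI : NeZero d := ⟨hd.ne'⟩
  have h2 : ∑ s : Fin d, w ⬝ᵥ shift x2 s = (∑ i, w i) * (∑ i, x2 i) := sum_shift_dot w x2
  have h1 : ∑ s : Fin d, w ⬝ᵥ shift x1 s = (∑ i, w i) * (∑ i, x1 i) := sum_shift_dot w x1
  have hinf : (d:ℝ) * Finset.univ.inf' hne (fun s : Fin d => w ⬝ᵥ shift x2 s) ≤
      ∑ s : Fin d, w ⬝ᵥ shift x2 s := by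
    calc (d:ℝ) * Finset.univ.inf' hne (fun s : Fin d => w ⬝ᵥ shift x2 s)
        = ∑ _s : Fin d, Finset.univ.inf' hne (fun s : Fin d => w ⬝ᵥ shift x2 s) := by
          simp [Finset.sum_const, nsmul_eq_mul]
      _ ≤ ∑ s : Fin d, w ⬝ᵥ shift x2 s :=
          Finset.sum_le_sum fun s _ => Finset.inf'_le (fun s : Fin d => w ⬝ᵥ shift x2 s) (Finset.mem_univ s)
  have hsup : ∑ s : Fin d, w ⬝ᵥ shift x1 s ≤
      (d:ℝ) * Finset.univ.sup' hne (fun s : Fin d => w ⬝ᵥ shift x1 s) := by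
    calc ∑ s : Fin d, w ⬝ᵥ shift x1 s
        ≤ ∑ _s : Fin d, Finset.univ.sup' hne (fun s : Fin d => w ⬝ᵥ shift x1 s) :=
          Finset.sum_le_sum fun s _ => Finset.le_sup' (fun s : Fin d => w ⬝ᵥ shift x1 s) (Finset.mem_univ s)
      _ = (d:ℝ) * Finset.univ.sup' hne (fun s : Fin d => w ⬝ᵥ shift x1 s) := by
          simp [Finset.sum_const, nsmul_eq_mul]
  -- m * d ≤ (∑ w) * (∑ x2 - ∑ x1)
  have hkey : m * d ≤ (∑ i, w i) * ((∑ i, x2 i) - (∑ i, x1 i)) := by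
    rw [hm]
    nlinarith [hinf, hsup, h1, h2]
  have hfdc : fdc w * (fdc x2 - fdc x1) = (∑ i, w i) * ((∑ i, x2 i) - (∑ i, x1 i)) / d := by
    unfold fdc
    field_simp
    rw [Real.sq_sqrt (le_of_lt hdpos)]; ring
  have hkey2 : m ≤ fdc w * (fdc x2 - fdc x1) := by
    rw [hfdc]
    rw [le_div_iff₀ hdpos]
    linarith [hkey]
  have hdiff : 0 < fdc x2 - fdc x1 := sub_pos.mpr hdc
  constructor
  · rw [div_le_iff₀ hdiff]; linarith
  · by_contra h
    push_neg at h
    nlinarith
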